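/- For α, β ≥ -1/2 with α ≥ β, the Jacobi polynomial attains its maximum absolute value on [-1,1] at x = 1: for all x ∈ [-1,1], |P_n^{(α,β)}(x)| ≤ P_n^{(α,β)}(1) = (α+1)_n / n!. -/

import Mathlib

open Real MeasureTheory Filter Set

noncomputable def jacobiP (n : ℕ) (a b x : ℝ) : ℝ :=
  ∑ s ∈ Finset.range (n + 1),
    (Real.Gamma ((n : ℝ) + a + 1) / ((Nat.factorial s : ℝ) * Real.Gamma ((n : ℝ) + a + 1 - s))) *
    (Real.Gamma ((n : ℝ) + b + 1) / ((Nat.factorial (n - s) : ℝ) * Real.Gamma (b + 1 + s))) *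
    ((x - 1) / 2) ^ (n - s) * ((x + 1) / 2) ^ s

/-!
Sonine's argument. `P = P_n^{(α,β)}` satisfies the Jacobi equation
`(x² - 1) P'' + ((α + β + 2) x + α - β) P' = λ P` with `λ = n (n + α + β + 1) > 0`, so
`F = λ P² + (1 - x²) P'²` has `F' = 2 P'² ((α + β + 1) x + α - β)`. For `α + β + 1 ≥ 0` this
changes sign at most once, from `-` to `+`, hence `F` is maximal on `[-1, 1]` at an endpoint.
Since `λ P² ≤ F` with equality at `±1`, `|P|` is maximal at `±1`, and
`|P(-1)| = (β + 1)_n / n! ≤ (α + 1)_n / n! = P(1)`.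
-/

open Polynomial

theorem le_max_of_hasDerivAt_eq_mul_affine {f g : ℝ → ℝ} {c d : ℝ}
    (hf : ∀ t, HasDerivAt f (g t * (c * t + d)) t) (hg : ∀ t, 0 ≤ g t) (hc : 0 ≤ c)
    {u v x : ℝ} (hx : x ∈ Icc u v) : f x ≤ max (f u) (f v) := by
  have hcont : Continuous f := continuous_iff_continuousAt.2 fun t => (hf t).continuousAt
  rcases le_or_gt 0 (c * x + d) with hpos | hneg
  · refine le_max_of_le_right <| monotoneOn_of_hasDerivWithinAt_nonneg (convex_Icc x v)
      hcont.continuousOn (fun t _ => (hf t).hasDerivWithinAt) (fun t ht => ?_)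
      ⟨le_rfl, hx.2⟩ ⟨hx.2, le_rfl⟩ hx.2
    rw [interior_Icc] at ht
    exact mul_nonneg (hg t) (by nlinarith [ht.1])
  · refine le_max_of_le_left <| antitoneOn_of_hasDerivWithinAt_nonpos (convex_Icc u x)
      hcont.continuousOn (fun t _ => (hf t).hasDerivWithinAt) (fun t ht => ?_)
      ⟨le_rfl, hx.1⟩ ⟨hx.1, le_rfl⟩ hx.1
    rw [interior_Icc] at ht
    exact mul_nonpos_of_nonneg_of_nonpos (hg t) (by nlinarith [ht.2])

noncomputable def jacobiOperator (a b : ℝ) : ℝ[X] →ₗ[ℝ] ℝ[X] :=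
  LinearMap.mulLeft ℝ (X ^ 2 - 1) ∘ₗ derivative ∘ₗ derivative +
    LinearMap.mulLeft ℝ (C (a + b + 2) * X + C (a - b)) ∘ₗ derivative

theorem jacobiOperator_apply (a b : ℝ) (p : ℝ[X]) :
    jacobiOperator a b p = (X ^ 2 - 1) * derivative (derivative p) +
      (C (a + b + 2) * X + C (a - b)) * derivative p :=
  rfl

theorem hasDerivAt_sonine {a b lam : ℝ} {p : ℝ[X]} (hp : jacobiOperator a b p = lam • p)
    (t : ℝ) :
    HasDerivAt (fun t => lam * p.eval t ^ 2 + (1 - t ^ 2) * (derivative p).eval t ^ 2)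
      (2 * (derivative p).eval t ^ 2 * ((a + b + 1) * t + (a - b))) t := by
  have hode := congrArg (eval t) hp
  simp only [jacobiOperator_apply, eval_add, eval_mul, eval_sub, eval_pow, eval_X, eval_one,
    eval_C, eval_smul, smul_eq_mul] at hode
  have h := (C lam * p ^ 2 + (1 - X ^ 2) * derivative p ^ 2).hasDerivAt t
  simp only [derivative_add, derivative_mul, derivative_sub, derivative_pow, derivative_C,
    derivative_X, derivative_one, eval_add, eval_mul, eval_sub, eval_pow, eval_C, eval_X,
    eval_one, eval_zero] at h
  refine h.congr_deriv ?_
  linear_combination -2 * eval t (derivative p) * hode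

theorem abs_eval_le_max_of_jacobiOperator_eq_smul {a b lam : ℝ} {p : ℝ[X]}
    (hab : 0 ≤ a + b + 1) (hlam : 0 < lam) (hp : jacobiOperator a b p = lam • p)
    {x : ℝ} (hx : x ∈ Icc (-1) 1) :
    |p.eval x| ≤ max |p.eval (-1)| |p.eval 1| := by
  have hF := le_max_of_hasDerivAt_eq_mul_affine (hasDerivAt_sonine hp)
    (fun t => by positivity) hab hx
  have hx2 : 0 ≤ 1 - x ^ 2 := by nlinarith [hx.1, hx.2]
  have hlow : lam * p.eval x ^ 2 ≤
      lam * p.eval x ^ 2 + (1 - x ^ 2) * (derivative p).eval x ^ 2 :=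
    le_add_of_nonneg_right (mul_nonneg hx2 (sq_nonneg _))
  norm_num at hF
  rcases hF with h | h
  · exact le_max_of_le_left (sq_le_sq.1 (le_of_mul_le_mul_left (hlow.trans h) hlam))
  · exact le_max_of_le_right (sq_le_sq.1 (le_of_mul_le_mul_left (hlow.trans h) hlam))

theorem mul_derivative_pow_of_derivative_eq_one {R : Type*} [CommRing R] {p : R[X]}
    (hp : derivative p = 1) (i : ℕ) : p * derivative (p ^ i) = i * p ^ i := by
  rcases i with _ | i
  · simp
  · rw [derivative_pow, hp]
    simp only [Nat.add_sub_cancel, mul_one, map_natCast, pow_succ]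
    ring

theorem sq_mul_derivative_derivative_pow_of_derivative_eq_one {R : Type*} [CommRing R]
    {p : R[X]} (hp : derivative p = 1) (i : ℕ) :
    p ^ 2 * derivative (derivative (p ^ i)) = i * (i - 1) * p ^ i := by
  have h := mul_derivative_pow_of_derivative_eq_one hp i
  have h' := congrArg derivative h
  simp only [derivative_mul, hp, derivative_natCast, zero_mul, zero_add, one_mul] at h'
  linear_combination p * h' + (i - 1 : R[X]) * h

theorem X_sq_sub_one_mul_jacobiOperator_pow_mul_pow (a b : ℝ) (i j : ℕ) :
    (X ^ 2 - 1) * jacobiOperator a b ((X - 1) ^ i * (X + 1) ^ j) =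
      C ((i + j) * (i + j + a + b + 1)) * ((X - 1) ^ (i + 1) * (X + 1) ^ (j + 1)) +
        C (2 * i * (i + a)) * ((X - 1) ^ i * (X + 1) ^ (j + 1)) -
        C (2 * j * (j + b)) * ((X - 1) ^ (i + 1) * (X + 1) ^ j) := by
  have hu : derivative (X - 1 : ℝ[X]) = 1 := by simp
  have hv : derivative (X + 1 : ℝ[X]) = 1 := by simp
  have hu1 := mul_derivative_pow_of_derivative_eq_one hu i
  have hv1 := mul_derivative_pow_of_derivative_eq_one hv j
  have hu2 := sq_mul_derivative_derivative_pow_of_derivative_eq_one hu i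
  have hv2 := sq_mul_derivative_derivative_pow_of_derivative_eq_one hv j
  simp only [jacobiOperator_apply, derivative_mul, map_add, map_mul, map_natCast,
    map_ofNat, map_sub, map_one]
  linear_combination ((X + 1 : ℝ[X]) ^ 2 * (X + 1) ^ j) * hu2 +
    ((X - 1 : ℝ[X]) ^ 2 * (X - 1) ^ i) * hv2 +
    (2 * (X - 1 : ℝ[X]) * (X + 1) * ((X + 1) * derivative ((X + 1) ^ j))) * hu1 +
    (2 * (X - 1 : ℝ[X]) * (X + 1) * (i : ℝ[X]) * (X - 1) ^ i) * hv1 +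
    (((C a + C b + 2) * X + (C a - C b)) * (X + 1) * (X + 1) ^ j) * hu1 +
    (((C a + C b + 2) * X + (C a - C b)) * (X - 1) * (X - 1) ^ i) * hv1

noncomputable def endpointExpansion (n : ℕ) (c : ℕ → ℝ) : ℝ[X] :=
  ∑ s ∈ Finset.range (n + 1), c s • ((X - 1) ^ (n - s) * (X + 1) ^ s)

theorem jacobiOperator_endpointExpansion {n : ℕ} {a b : ℝ} {c : ℕ → ℝ}
    (hc : ∀ s < n, c (s + 1) * (s + 1) * (s + 1 + b) = c s * (n - s) * (n - s + a)) :
    jacobiOperator a b (endpointExpansion n c) =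
      ((n : ℝ) * (n + a + b + 1)) • endpointExpansion n c := by
  have hX : (X ^ 2 - 1 : ℝ[X]) ≠ 0 := fun h => by simpa using congrArg (eval 0) h
  -- Multiplied by `X² - 1`, every exponent stays natural; the recurrence `hc` says exactly
  -- `F s = G (s + 1)`, so the lowering terms telescope away.
  refine mul_left_cancel₀ hX ?_
  set F : ℕ → ℝ[X] := fun s =>
    C (2 * c s * (n - s) * (n - s + a)) * ((X - 1) ^ (n - s) * (X + 1) ^ (s + 1))
  set G : ℕ → ℝ[X] := fun s =>
    C (2 * c s * s * (s + b)) * ((X - 1) ^ (n - s + 1) * (X + 1) ^ s)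
  have htelescope : ∑ s ∈ Finset.range (n + 1), (F s - G s) = 0 := by
    rw [Finset.sum_sub_distrib, sub_eq_zero, Finset.sum_range_succ, Finset.sum_range_succ']
    simp only [F, G, Nat.cast_zero, sub_self, mul_zero, zero_mul, map_zero, add_zero]
    refine Finset.sum_congr rfl fun s hs => ?_
    have hsn := Finset.mem_range.mp hs
    rw [show n - s = n - (s + 1) + 1 by omega]
    push_cast
    congr 2
    linear_combination -2 * hc s hsn
  calc (X ^ 2 - 1) * jacobiOperator a b (endpointExpansion n c)
      = ∑ s ∈ Finset.range (n + 1), (C ((n : ℝ) * (n + a + b + 1)) *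
          ((X ^ 2 - 1) * (c s • ((X - 1) ^ (n - s) * (X + 1) ^ s))) + (F s - G s)) := by
        simp only [endpointExpansion, map_sum, map_smul, Finset.mul_sum]
        refine Finset.sum_congr rfl fun s hs => ?_
        have hsn : s ≤ n := Nat.lt_succ_iff.mp (Finset.mem_range.mp hs)
        rw [mul_smul_comm, X_sq_sub_one_mul_jacobiOperator_pow_mul_pow]
        simp only [F, G, smul_eq_C_mul, Nat.cast_sub hsn, map_mul, map_add, map_sub,
          map_natCast, map_ofNat, map_one]
        ring
    _ = (X ^ 2 - 1) * (((n : ℝ) * (n + a + b + 1)) • endpointExpansion n c) := by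
        rw [Finset.sum_add_distrib, htelescope, add_zero, ← Finset.mul_sum, ← Finset.mul_sum,
          endpointExpansion, smul_eq_C_mul]
        ring

theorem eval_one_endpointExpansion (n : ℕ) (c : ℕ → ℝ) :
    (endpointExpansion n c).eval 1 = 2 ^ n * c n := by
  rw [endpointExpansion, eval_finsetSum, Finset.sum_eq_single_of_mem n (by simp)]
  · norm_num [mul_comm]
  · intro s hs hsn
    have : n - s ≠ 0 := by have := Finset.mem_range.mp hs; omega
    simp [this]

theorem eval_neg_one_endpointExpansion (n : ℕ) (c : ℕ → ℝ) :
    (endpointExpansion n c).eval (-1) = (-2) ^ n * c 0 := by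
  rw [endpointExpansion, eval_finsetSum, Finset.sum_eq_single_of_mem 0 (by simp)]
  · norm_num [mul_comm]
  · intro s _ hs
    simp [hs]

noncomputable def jacobiCoeff (n : ℕ) (a b : ℝ) (s : ℕ) : ℝ :=
  Gamma (n + a + 1) / (Nat.factorial s * Gamma (n + a + 1 - s)) *
    (Gamma (n + b + 1) / (Nat.factorial (n - s) * Gamma (b + 1 + s)))

theorem jacobiP_eq_eval_endpointExpansion (n : ℕ) (a b x : ℝ) :
    jacobiP n a b x = (2 ^ n)⁻¹ * (endpointExpansion n (jacobiCoeff n a b)).eval x := by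
  rw [jacobiP, endpointExpansion, eval_finsetSum, Finset.mul_sum]
  refine Finset.sum_congr rfl fun s hs => ?_
  have hsn : s ≤ n := Nat.lt_succ_iff.mp (Finset.mem_range.mp hs)
  rw [eval_smul, smul_eq_mul, jacobiCoeff, ← Nat.sub_add_cancel hsn, pow_add]
  simp only [eval_mul, eval_pow, eval_sub, eval_add, eval_X, eval_one, div_pow,
    Nat.add_sub_cancel]
  ring

theorem jacobiCoeff_succ {n : ℕ} {a b : ℝ} (ha : -1 < a) (hb : -1 < b) {s : ℕ} (hs : s < n) :
    jacobiCoeff n a b (s + 1) * (s + 1) * (s + 1 + b) =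
      jacobiCoeff n a b s * (n - s) * (n - s + a) := by
  have hns : (s : ℝ) + 1 ≤ n := by exact_mod_cast hs
  have hpos_a : 0 < (n : ℝ) + a - s := by linarith
  have hpos_b : 0 < b + 1 + s := by linarith [s.cast_nonneg (α := ℝ)]
  have hGa : Gamma (n + a + 1 - s) = (n + a - s) * Gamma (n + a - s) := by
    rw [← Gamma_add_one hpos_a.ne']; ring_nf
  have hGb : Gamma (b + 1 + (s + 1 : ℕ)) = (b + 1 + s) * Gamma (b + 1 + s) := by
    rw [← Gamma_add_one hpos_b.ne']; push_cast; ring_nf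
  have hfac : (Nat.factorial (n - s) : ℝ) = (n - s) * Nat.factorial (n - (s + 1)) := by
    rw [show n - s = n - (s + 1) + 1 by omega, Nat.factorial_succ]
    push_cast [Nat.cast_sub hs]
    ring
  have hGa' : Gamma (n + a + 1 - (s + 1 : ℕ)) = Gamma (n + a - s) := by push_cast; ring_nf
  have hGa_ne := (Gamma_pos_of_pos hpos_a).ne'
  have hGb_ne := (Gamma_pos_of_pos hpos_b).ne'
  have hna_ne := hpos_a.ne'
  have hns_ne : (n : ℝ) - s ≠ 0 := by linarith
  rw [jacobiCoeff, jacobiCoeff, hGa, hGa', hGb, hfac, Nat.factorial_succ]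
  field_simp
  push_cast
  ring

theorem Real.Gamma_add_nat {x : ℝ} (hx : 0 < x) (n : ℕ) :
    Gamma (x + n) = (ascPochhammer ℝ n).eval x * Gamma x := by
  induction n with
  | zero => simp
  | succ k ih =>
    rw [Nat.cast_succ, ← add_assoc, Gamma_add_one (by positivity), ih, ascPochhammer_succ_eval]
    ring

theorem ascPochhammer_eval_le_eval {S : Type*} [Semiring S] [PartialOrder S]
    [IsStrictOrderedRing S] (n : ℕ) {x y : S} (hx : 0 < x) (hxy : x ≤ y) :
    (ascPochhammer S n).eval x ≤ (ascPochhammer S n).eval y := by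
  induction n with
  | zero => simp
  | succ k ih =>
    rw [ascPochhammer_succ_eval, ascPochhammer_succ_eval]
    exact mul_le_mul ih (by gcongr) (by positivity)
      ((ascPochhammer_pos k x hx).le.trans ih)

theorem jacobiCoeff_self (n : ℕ) {a b : ℝ} (ha : -1 < a) (hb : -1 < b) :
    jacobiCoeff n a b n = (ascPochhammer ℝ n).eval (a + 1) / Nat.factorial n := by
  have hGa : Gamma (a + 1) ≠ 0 := (Gamma_pos_of_pos (by linarith)).ne'
  have hGb : Gamma (n + b + 1) ≠ 0 :=
    (Gamma_pos_of_pos (by linarith [n.cast_nonneg (α := ℝ)])).ne'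
  rw [jacobiCoeff, Nat.sub_self, show (n : ℝ) + a + 1 = a + 1 + n by ring,
    Real.Gamma_add_nat (by linarith), add_sub_cancel_right, add_right_comm b, add_comm b]
  field_simp
  simp

theorem jacobiCoeff_zero (n : ℕ) {a b : ℝ} (ha : -1 < a) (hb : -1 < b) :
    jacobiCoeff n a b 0 = (ascPochhammer ℝ n).eval (b + 1) / Nat.factorial n := by
  have hGa : Gamma (n + a + 1) ≠ 0 :=
    (Gamma_pos_of_pos (by linarith [n.cast_nonneg (α := ℝ)])).ne'
  have hGb : Gamma (b + 1) ≠ 0 := (Gamma_pos_of_pos (by linarith)).ne'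
  rw [jacobiCoeff, Nat.sub_zero, Nat.factorial_zero, Nat.cast_one, Nat.cast_zero, sub_zero,
    add_zero, show (n : ℝ) + b + 1 = b + 1 + n by ring, Real.Gamma_add_nat (by linarith)]
  field_simp

theorem jacobiP_one (n : ℕ) {a b : ℝ} (ha : -1 < a) (hb : -1 < b) :
    jacobiP n a b 1 = (ascPochhammer ℝ n).eval (a + 1) / Nat.factorial n := by
  rw [jacobiP_eq_eval_endpointExpansion, eval_one_endpointExpansion, jacobiCoeff_self n ha hb,
    inv_mul_cancel_left₀ (by positivity)]

theorem jacobiP_neg_one (n : ℕ) {a b : ℝ} (ha : -1 < a) (hb : -1 < b) :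
    jacobiP n a b (-1) = (-1) ^ n * ((ascPochhammer ℝ n).eval (b + 1) / Nat.factorial n) := by
  rw [jacobiP_eq_eval_endpointExpansion, eval_neg_one_endpointExpansion,
    jacobiCoeff_zero n ha hb, ← mul_assoc, neg_pow, mul_comm ((-1) ^ n), ← mul_assoc,
    inv_mul_cancel₀ (by positivity), one_mul]

theorem abs_jacobiP_le_max (n : ℕ) {a b : ℝ} (ha : -1 < a) (hb : -1 < b) (hab : 0 ≤ a + b + 1)
    {x : ℝ} (hx : x ∈ Icc (-1) 1) :
    |jacobiP n a b x| ≤ max |jacobiP n a b (-1)| |jacobiP n a b 1| := by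
  rcases Nat.eq_zero_or_pos n with rfl | hn
  · simp [jacobiP]
  have hlam : 0 < (n : ℝ) * (n + a + b + 1) := by
    have : (1 : ℝ) ≤ n := by exact_mod_cast hn
    nlinarith
  simp only [jacobiP_eq_eval_endpointExpansion, abs_mul]
  rw [← mul_max_of_nonneg _ _ (abs_nonneg _)]
  exact mul_le_mul_of_nonneg_left (abs_eval_le_max_of_jacobiOperator_eq_smul hab hlam
    (jacobiOperator_endpointExpansion fun s hs => jacobiCoeff_succ ha hb hs) hx) (abs_nonneg _)

theorem jacobi_max_at_one (n : ℕ) (α β : ℝ) (hβ : -(1 / 2 : ℝ) ≤ β) (hαβ : β ≤ α) :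
    (∀ x ∈ Set.Icc (-1 : ℝ) 1, |jacobiP n α β x| ≤ jacobiP n α β 1) ∧
    jacobiP n α β 1 = (ascPochhammer ℝ n).eval (α + 1) / (Nat.factorial n : ℝ) := by
  have hα : -1 < α := by linarith
  have hβ' : -1 < β := by linarith
  have hβ_poch := ascPochhammer_pos n (β + 1) (by linarith)
  have hα_poch := ascPochhammer_pos n (α + 1) (by linarith)
  have hpoch : (ascPochhammer ℝ n).eval (β + 1) ≤ (ascPochhammer ℝ n).eval (α + 1) :=
    ascPochhammer_eval_le_eval n (by linarith) (by linarith)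
  refine ⟨fun x hx => ?_, jacobiP_one n hα hβ'⟩
  calc |jacobiP n α β x| ≤ max |jacobiP n α β (-1)| |jacobiP n α β 1| :=
        abs_jacobiP_le_max n hα hβ' (by linarith) hx
    _ = jacobiP n α β 1 := by
        rw [jacobiP_neg_one n hα hβ', jacobiP_one n hα hβ', abs_mul, abs_pow, abs_neg, abs_one,
          one_pow, one_mul, abs_div, abs_div, Nat.abs_cast, abs_of_pos hβ_poch,
          abs_of_pos hα_poch, max_eq_right (by gcongr)]
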